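/- The remainder of the tensor-product Bernstein cubature formula satisfies, for $F \in C^{2,2}([0,1]^2)$: $|R_{n_1,n_2}[F]| \le \frac{1}{12 n_1}\|F^{(2,0)}\|_\infty + \frac{1}{12 n_2}\|F^{(0,2)}\|_\infty + \frac{1}{144 n_1 n_2}\|F^{(2,2)}\|_\infty$. -/

import Mathlib

/-!
Integrating the tensor-product Bernstein polynomial `B₂ B₁ F` over the square reproduces the
cubature sum exactly, because every Bernstein basis polynomial of degree `n` has integral
`1 / (n + 1)`. Hence `R = ∫∫ (F - B₂ B₁ F)`. Pointwise, `F - B₂ B₁ F = (F - B₂ F) + B₂ (F - B₁ F)`,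
and `B₂` is positive and preserves constants, so the one-dimensional estimate
`|g - B_n g| ≤ x (1 - x) / (2 n) ‖g''‖` (second-order Taylor expansion at `x`, averaged against the
Bernstein weights, whose mean is `x` and variance `x (1 - x) / n`) bounds the integrand. Integrating
`x (1 - x)` gives `1 / 6`, which already yields the first two terms of the bound.
-/

open Finset Set intervalIntegral

noncomputable def bernsteinBasis (n k : ℕ) (x : ℝ) : ℝ := (bernsteinPolynomial ℝ n k).eval x

lemma bernsteinBasis_eq (n k : ℕ) (x : ℝ) :
    bernsteinBasis n k x = n.choose k * x ^ k * (1 - x) ^ (n - k) := by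
  simp [bernsteinBasis, bernsteinPolynomial]

lemma bernsteinBasis_nonneg (n k : ℕ) {x : ℝ} (hx : x ∈ Icc (0:ℝ) 1) :
    0 ≤ bernsteinBasis n k x := by
  rw [bernsteinBasis_eq]
  exact mul_nonneg (mul_nonneg (Nat.cast_nonneg _) (pow_nonneg hx.1 _))
    (pow_nonneg (sub_nonneg.2 hx.2) _)

@[fun_prop]
lemma continuous_bernsteinBasis (n k : ℕ) : Continuous (bernsteinBasis n k) :=
  (bernsteinPolynomial ℝ n k).continuous

lemma sum_bernsteinBasis (n : ℕ) (x : ℝ) : ∑ k ∈ range (n + 1), bernsteinBasis n k x = 1 := by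
  simpa [bernsteinBasis, Polynomial.eval_finsetSum] using
    congrArg (Polynomial.eval x) (bernsteinPolynomial.sum ℝ n)

lemma sum_bernsteinBasis_mul_div_sub {n : ℕ} (hn : n ≠ 0) (x : ℝ) :
    ∑ k ∈ range (n + 1), bernsteinBasis n k x * ((k : ℝ) / n - x) = 0 := by
  have hmean : ∑ k ∈ range (n + 1), (k : ℝ) * bernsteinBasis n k x = n * x := by
    simpa [bernsteinBasis, Polynomial.eval_finsetSum] using
      congrArg (Polynomial.eval x) (bernsteinPolynomial.sum_smul ℝ n)
  have hn' : (n : ℝ) ≠ 0 := by exact_mod_cast hn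
  calc ∑ k ∈ range (n + 1), bernsteinBasis n k x * ((k : ℝ) / n - x)
      = (∑ k ∈ range (n + 1), (k : ℝ) * bernsteinBasis n k x) / n
        - x * ∑ k ∈ range (n + 1), bernsteinBasis n k x := by
        rw [sum_div, mul_sum, ← sum_sub_distrib]
        exact sum_congr rfl fun k _ => by ring
    _ = 0 := by rw [hmean, sum_bernsteinBasis]; field_simp; ring

lemma sum_bernsteinBasis_mul_div_sub_sq {n : ℕ} (hn : n ≠ 0) (x : ℝ) :
    ∑ k ∈ range (n + 1), bernsteinBasis n k x * ((k : ℝ) / n - x) ^ 2 = x * (1 - x) / n := by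
  have hvar : ∑ k ∈ range (n + 1), ((n : ℝ) * x - k) ^ 2 * bernsteinBasis n k x
      = n * x * (1 - x) := by
    simpa [bernsteinBasis, Polynomial.eval_finsetSum] using
      congrArg (Polynomial.eval x) (bernsteinPolynomial.variance ℝ n)
  have hn' : (n : ℝ) ≠ 0 := by exact_mod_cast hn
  calc ∑ k ∈ range (n + 1), bernsteinBasis n k x * ((k : ℝ) / n - x) ^ 2
      = (∑ k ∈ range (n + 1), ((n : ℝ) * x - k) ^ 2 * bernsteinBasis n k x) / n ^ 2 := by
        rw [sum_div]
        exact sum_congr rfl fun k _ => by field_simp; ring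
    _ = x * (1 - x) / n := by rw [hvar]; field_simp

lemma integral_bernsteinBasis_zero (n : ℕ) :
    ∫ x in (0:ℝ)..1, bernsteinBasis n 0 x = 1 / (n + 1) := by
  simp [bernsteinBasis_eq, intervalIntegral.integral_comp_sub_left (fun x => x ^ n)]

lemma integral_bernsteinBasis_succ {n k : ℕ} (hk : k < n) :
    ∫ x in (0:ℝ)..1, bernsteinBasis n (k + 1) x = ∫ x in (0:ℝ)..1, bernsteinBasis n k x := by
  have hderiv : ∀ x ∈ uIcc (0:ℝ) 1, HasDerivAt (bernsteinBasis (n + 1) (k + 1))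
      ((n + 1) * (bernsteinBasis n k x - bernsteinBasis n (k + 1) x)) x := by
    intro x _
    exact ((bernsteinPolynomial ℝ (n + 1) (k + 1)).hasDerivAt x).congr_deriv
      (by simp [bernsteinBasis, bernsteinPolynomial.derivative_succ])
  have hint (m j : ℕ) : IntervalIntegrable (bernsteinBasis m j) MeasureTheory.volume 0 1 :=
    (continuous_bernsteinBasis m j).intervalIntegrable 0 1
  have hFTC := integral_eq_sub_of_hasDerivAt hderiv (((hint n k).sub (hint n (k + 1))).const_mul _)
  rw [integral_const_mul, integral_sub (hint n k) (hint n (k + 1))] at hFTC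
  simp [bernsteinBasis, bernsteinPolynomial.eval_at_0, bernsteinPolynomial.eval_at_1, hk.ne,
    sub_eq_zero] at hFTC
  exact (hFTC.resolve_left (by positivity)).symm

lemma integral_bernsteinBasis {n k : ℕ} (hk : k ≤ n) :
    ∫ x in (0:ℝ)..1, bernsteinBasis n k x = 1 / (n + 1) := by
  induction k with
  | zero => exact integral_bernsteinBasis_zero n
  | succ k ih => rw [integral_bernsteinBasis_succ hk, ih (by omega)]

lemma abs_le_of_abs_deriv_le_mul_sub {h h' : ℝ → ℝ} {M c d : ℝ} (hcd : c ≤ d)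
    (hh : ∀ t ∈ Icc c d, HasDerivWithinAt h (h' t) (Icc c d) t) (h0 : h c = 0)
    (hbound : ∀ t ∈ Icc c d, |h' t| ≤ M * (t - c)) :
    |h d| ≤ M / 2 * (d - c) ^ 2 := by
  have hB (t : ℝ) : HasDerivAt (fun t => M / 2 * (t - c) ^ 2) (M * (t - c)) t :=
    ((((hasDerivAt_id' t).sub_const c).fun_pow 2).const_mul (M / 2)).congr_deriv
      (by norm_num; ring)
  refine image_norm_le_of_norm_deriv_right_le_deriv_boundary
    (fun t ht => (hh t ht).continuousWithinAt)
    (fun t ht => (hh t (Ico_subset_Icc_self ht)).mono_of_mem_nhdsWithin (Icc_mem_nhdsGE_of_mem ht))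
    (by simp [h0]) hB (fun t ht => hbound t (Ico_subset_Icc_self ht)) (right_mem_Icc.2 hcd)

lemma abs_le_of_abs_deriv_le_mul_abs_sub {h h' : ℝ → ℝ} {M x y : ℝ}
    (hh : ∀ t ∈ uIcc x y, HasDerivWithinAt h (h' t) (uIcc x y) t) (h0 : h x = 0)
    (hbound : ∀ t ∈ uIcc x y, |h' t| ≤ M * |t - x|) :
    |h y| ≤ M / 2 * (y - x) ^ 2 := by
  rcases le_total x y with hxy | hyx
  · rw [uIcc_of_le hxy] at hh hbound
    refine abs_le_of_abs_deriv_le_mul_sub hxy hh h0 fun t ht => ?_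
    simpa [abs_of_nonneg (sub_nonneg.2 ht.1)] using hbound t ht
  · rw [uIcc_of_ge hyx] at hh hbound
    have hneg : MapsTo (fun s : ℝ => -s) (Icc (-x) (-y)) (Icc y x) :=
      fun s hs => ⟨le_neg.1 hs.2, neg_le.1 hs.1⟩
    have key := abs_le_of_abs_deriv_le_mul_sub (M := M) (h := fun s => h (-s))
      (h' := fun s => -h' (-s))
      (neg_le_neg hyx)
      (fun s hs => ((hh (-s) (hneg hs)).comp s (hasDerivWithinAt_neg s _) hneg).congr_deriv
        (mul_neg_one _))
      (by simpa using h0)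
      (fun s hs => by
        simpa [abs_of_nonpos (by linarith [(hneg hs).2] : -s - x ≤ 0), abs_neg, add_comm] using
          hbound (-s) (hneg hs))
    rw [neg_neg] at key
    calc |h y| ≤ M / 2 * (-y - -x) ^ 2 := key
      _ = M / 2 * (y - x) ^ 2 := by ring

lemma abs_sub_sub_deriv_mul_le {g g' g'' : ℝ → ℝ} {M a b : ℝ}
    (hg : ∀ t ∈ Icc a b, HasDerivWithinAt g (g' t) (Icc a b) t)
    (hg' : ∀ t ∈ Icc a b, HasDerivWithinAt g' (g'' t) (Icc a b) t)
    (hM : ∀ t ∈ Icc a b, |g'' t| ≤ M) {x y : ℝ} (hx : x ∈ Icc a b) (hy : y ∈ Icc a b) :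
    |g y - g x - g' x * (y - x)| ≤ M / 2 * (y - x) ^ 2 := by
  have hsub : uIcc x y ⊆ Icc a b := uIcc_subset_Icc hx hy
  refine abs_le_of_abs_deriv_le_mul_abs_sub (h := fun t => g t - g x - g' x * (t - x))
    (h' := fun t => g' t - g' x) (fun t ht => ?_) (by simp) (fun t ht => ?_)
  · exact ((((hg t (hsub ht)).mono hsub).sub_const _).sub
      (((hasDerivWithinAt_id t _).sub_const x).const_mul (g' x))).congr_deriv (by simp)
  · simpa [Real.norm_eq_abs] using (convex_Icc a b).norm_image_sub_le_of_norm_hasDerivWithin_le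
      hg' (fun t ht => by simpa using hM t ht) hx (hsub ht)

noncomputable def bernsteinOp (n : ℕ) (g : ℝ → ℝ) (x : ℝ) : ℝ :=
  ∑ k ∈ range (n + 1), bernsteinBasis n k x * g (k / n)

lemma bernsteinOp_sub (n : ℕ) (f g : ℝ → ℝ) (x : ℝ) :
    bernsteinOp n (fun t => f t - g t) x = bernsteinOp n f x - bernsteinOp n g x := by
  simp only [bernsteinOp, mul_sub, sum_sub_distrib]

@[fun_prop]
lemma continuous_bernsteinOp (n : ℕ) (g : ℝ → ℝ) : Continuous (bernsteinOp n g) := by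
  unfold bernsteinOp; fun_prop

lemma natCast_div_mem_Icc {n k : ℕ} (hk : k ∈ range (n + 1)) : (k : ℝ) / n ∈ Icc (0:ℝ) 1 :=
  unitInterval.div_mem (Nat.cast_nonneg _) (Nat.cast_nonneg _)
    (by exact_mod_cast Nat.lt_succ_iff.mp (mem_range.mp hk))

lemma abs_sum_bernsteinBasis_mul_le {n : ℕ} {x : ℝ} (hx : x ∈ Icc (0:ℝ) 1) {u v : ℕ → ℝ}
    (huv : ∀ k ∈ range (n + 1), |u k| ≤ v k) :
    |∑ k ∈ range (n + 1), bernsteinBasis n k x * u k| ≤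
      ∑ k ∈ range (n + 1), bernsteinBasis n k x * v k := by
  refine (abs_sum_le_sum_abs _ _).trans (sum_le_sum fun k hk => ?_)
  rw [abs_mul, abs_of_nonneg (bernsteinBasis_nonneg n k hx)]
  exact mul_le_mul_of_nonneg_left (huv k hk) (bernsteinBasis_nonneg n k hx)

lemma abs_bernsteinOp_le {n : ℕ} {g : ℝ → ℝ} {C x : ℝ} (hx : x ∈ Icc (0:ℝ) 1)
    (hg : ∀ t ∈ Icc (0:ℝ) 1, |g t| ≤ C) : |bernsteinOp n g x| ≤ C :=
  calc |bernsteinOp n g x| ≤ ∑ k ∈ range (n + 1), bernsteinBasis n k x * C :=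
        abs_sum_bernsteinBasis_mul_le hx fun k hk => hg _ (natCast_div_mem_Icc hk)
    _ = C := by rw [← sum_mul, sum_bernsteinBasis, one_mul]

lemma abs_bernsteinOp_sub_le {n : ℕ} (hn : n ≠ 0) {g g' g'' : ℝ → ℝ} {M : ℝ}
    (hg : ∀ t ∈ Icc (0:ℝ) 1, HasDerivWithinAt g (g' t) (Icc (0:ℝ) 1) t)
    (hg' : ∀ t ∈ Icc (0:ℝ) 1, HasDerivWithinAt g' (g'' t) (Icc (0:ℝ) 1) t)
    (hM : ∀ t ∈ Icc (0:ℝ) 1, |g'' t| ≤ M) {x : ℝ} (hx : x ∈ Icc (0:ℝ) 1) :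
    |bernsteinOp n g x - g x| ≤ M * (x * (1 - x)) / (2 * n) := by
  -- the basis sums to one and has mean `x`, so only the Taylor remainders survive
  have hrem : bernsteinOp n g x - g x = ∑ k ∈ range (n + 1),
      bernsteinBasis n k x * (g (k / n) - g x - g' x * (k / n - x)) :=
    calc bernsteinOp n g x - g x
        = bernsteinOp n g x - g x * ∑ k ∈ range (n + 1), bernsteinBasis n k x
          - g' x * ∑ k ∈ range (n + 1), bernsteinBasis n k x * ((k : ℝ) / n - x) := by
          rw [sum_bernsteinBasis, sum_bernsteinBasis_mul_div_sub hn]; ring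
      _ = _ := by
          rw [bernsteinOp, mul_sum, mul_sum, ← sum_sub_distrib, ← sum_sub_distrib]
          exact sum_congr rfl fun k _ => by ring
  calc |bernsteinOp n g x - g x|
      ≤ ∑ k ∈ range (n + 1), bernsteinBasis n k x * (M / 2 * ((k : ℝ) / n - x) ^ 2) := by
        rw [hrem]
        exact abs_sum_bernsteinBasis_mul_le hx fun k hk =>
          abs_sub_sub_deriv_mul_le hg hg' hM hx (natCast_div_mem_Icc hk)
    _ = M / 2 * ∑ k ∈ range (n + 1), bernsteinBasis n k x * ((k : ℝ) / n - x) ^ 2 := by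
        rw [mul_sum]; exact sum_congr rfl fun k _ => by ring
    _ = M * (x * (1 - x)) / (2 * n) := by
        rw [sum_bernsteinBasis_mul_div_sub_sq hn]; ring

lemma integral_bernsteinOp (n : ℕ) (g : ℝ → ℝ) :
    ∫ x in (0:ℝ)..1, bernsteinOp n g x = 1 / (n + 1) * ∑ k ∈ range (n + 1), g (k / n) := by
  unfold bernsteinOp
  rw [integral_finsetSum fun k _ => (by fun_prop : Continuous _).intervalIntegrable 0 1,
    mul_sum]
  refine sum_congr rfl fun k hk => ?_
  rw [integral_mul_const, integral_bernsteinBasis (Nat.lt_succ_iff.mp (mem_range.mp hk))]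

noncomputable def bernsteinOp₂ (n₁ n₂ : ℕ) (F : ℝ → ℝ → ℝ) (x y : ℝ) : ℝ :=
  bernsteinOp n₂ (fun t => bernsteinOp n₁ (fun s => F s t) x) y

lemma continuous_bernsteinOp₂ (n₁ n₂ : ℕ) (F : ℝ → ℝ → ℝ) :
    Continuous (fun p : ℝ × ℝ => bernsteinOp₂ n₁ n₂ F p.1 p.2) := by
  simp only [bernsteinOp₂, bernsteinOp]; fun_prop

lemma integral_integral_bernsteinOp₂ (n₁ n₂ : ℕ) (F : ℝ → ℝ → ℝ) :
    ∫ x in (0:ℝ)..1, ∫ y in (0:ℝ)..1, bernsteinOp₂ n₁ n₂ F x y =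
      1 / ((n₁ + 1) * (n₂ + 1)) *
        ∑ i ∈ range (n₁ + 1), ∑ j ∈ range (n₂ + 1), F (i / n₁) (j / n₂) := by
  simp only [bernsteinOp₂, integral_bernsteinOp]
  rw [integral_const_mul,
    integral_finsetSum fun j _ => (continuous_bernsteinOp _ _).intervalIntegrable 0 1]
  simp only [integral_bernsteinOp]
  rw [← mul_sum, sum_comm, ← mul_assoc]
  congr 1; field_simp

lemma abs_sub_bernsteinOp₂_le {n₁ n₂ : ℕ} (hn₁ : n₁ ≠ 0) (hn₂ : n₂ ≠ 0)
    {F Fx Fxx Fy Fyy : ℝ → ℝ → ℝ} {Mxx Myy : ℝ}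
    (hFx : ∀ y ∈ Icc (0:ℝ) 1, ∀ x ∈ Icc (0:ℝ) 1,
      HasDerivWithinAt (fun t => F t y) (Fx x y) (Icc (0:ℝ) 1) x)
    (hFxx : ∀ y ∈ Icc (0:ℝ) 1, ∀ x ∈ Icc (0:ℝ) 1,
      HasDerivWithinAt (fun t => Fx t y) (Fxx x y) (Icc (0:ℝ) 1) x)
    (hFy : ∀ x ∈ Icc (0:ℝ) 1, ∀ y ∈ Icc (0:ℝ) 1,
      HasDerivWithinAt (fun t => F x t) (Fy x y) (Icc (0:ℝ) 1) y)
    (hFyy : ∀ x ∈ Icc (0:ℝ) 1, ∀ y ∈ Icc (0:ℝ) 1,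
      HasDerivWithinAt (fun t => Fy x t) (Fyy x y) (Icc (0:ℝ) 1) y)
    (hMxx : ∀ x ∈ Icc (0:ℝ) 1, ∀ y ∈ Icc (0:ℝ) 1, |Fxx x y| ≤ Mxx)
    (hMyy : ∀ x ∈ Icc (0:ℝ) 1, ∀ y ∈ Icc (0:ℝ) 1, |Fyy x y| ≤ Myy)
    {x y : ℝ} (hx : x ∈ Icc (0:ℝ) 1) (hy : y ∈ Icc (0:ℝ) 1) :
    |F x y - bernsteinOp₂ n₁ n₂ F x y| ≤
      Mxx * (x * (1 - x)) / (2 * n₁) + Myy * (y * (1 - y)) / (2 * n₂) := by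
  have hsplit : F x y - bernsteinOp₂ n₁ n₂ F x y =
      bernsteinOp n₂ (fun t => F x t - bernsteinOp n₁ (fun s => F s t) x) y +
        (F x y - bernsteinOp n₂ (fun t => F x t) y) := by
    rw [bernsteinOp_sub, bernsteinOp₂]; ring
  rw [hsplit]
  refine (abs_add_le _ _).trans (add_le_add ?_ ?_)
  · refine abs_bernsteinOp_le hy fun t ht => ?_
    rw [abs_sub_comm]
    exact abs_bernsteinOp_sub_le hn₁ (hFx t ht) (hFxx t ht) (fun s hs => hMxx s hs t ht) hx
  · rw [abs_sub_comm]
    exact abs_bernsteinOp_sub_le hn₂ (hFy x hx) (hFyy x hx) (hMyy x hx) hy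

lemma continuousOn_intervalIntegral_of_continuousOn_prod {F : ℝ → ℝ → ℝ} {a b c d : ℝ}
    (hab : a ≤ b) (hcd : c ≤ d)
    (hF : ContinuousOn (fun p : ℝ × ℝ => F p.1 p.2) (Icc a b ×ˢ Icc c d)) :
    ContinuousOn (fun x => ∫ y in c..d, F x y) (Icc a b) := by
  -- extend `F` continuously to the plane by clamping to the rectangle
  set G : ℝ → ℝ → ℝ := fun x y => F (projIcc a b hab x) (projIcc c d hcd y)
  have hclamp :
      Continuous fun p : ℝ × ℝ => ((projIcc a b hab p.1 : ℝ), (projIcc c d hcd p.2 : ℝ)) := by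
    fun_prop
  have hG : Continuous (Function.uncurry G) :=
    hF.comp_continuous hclamp fun p => mk_mem_prod (projIcc a b hab p.1).2 (projIcc c d hcd p.2).2
  refine (continuous_parametric_intervalIntegral_of_continuous' hG c d).continuousOn.congr
    fun x hx => integral_congr fun y hy => ?_
  rw [uIcc_of_le hcd] at hy
  simp [G, projIcc_of_mem hab hx, projIcc_of_mem hcd hy]

lemma integral_mul_one_sub : ∫ x in (0:ℝ)..1, x * (1 - x) = 1 / 6 := by
  simp [mul_sub, integral_sub, ← sq]; norm_num

lemma abs_integral_le_of_abs_le {f : ℝ → ℝ} {c d : ℝ} (hf : ContinuousOn f (Icc 0 1))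
    (hbound : ∀ x ∈ Icc (0:ℝ) 1, |f x| ≤ c * (x * (1 - x)) + d) :
    |∫ x in (0:ℝ)..1, f x| ≤ c / 6 + d :=
  calc |∫ x in (0:ℝ)..1, f x| ≤ ∫ x in (0:ℝ)..1, |f x| := abs_integral_le_integral_abs zero_le_one
    _ ≤ ∫ x in (0:ℝ)..1, c * (x * (1 - x)) + d :=
        integral_mono_on zero_le_one (hf.abs.intervalIntegrable_of_Icc zero_le_one)
          ((by fun_prop : Continuous fun x : ℝ => c * (x * (1 - x)) + d).intervalIntegrable 0 1)
          hbound
    _ = c / 6 + d := by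
        rw [integral_add (Continuous.intervalIntegrable (by fun_prop) 0 1) intervalIntegrable_const,
          integral_const_mul, integral_mul_one_sub]
        simp; ring

lemma abs_integral_integral_sub_le {F G : ℝ → ℝ → ℝ} {a b : ℝ}
    (hF : ContinuousOn (fun p : ℝ × ℝ => F p.1 p.2) (Icc (0:ℝ) 1 ×ˢ Icc (0:ℝ) 1))
    (hG : ContinuousOn (fun p : ℝ × ℝ => G p.1 p.2) (Icc (0:ℝ) 1 ×ˢ Icc (0:ℝ) 1))
    (hbound : ∀ x ∈ Icc (0:ℝ) 1, ∀ y ∈ Icc (0:ℝ) 1,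
      |F x y - G x y| ≤ a * (x * (1 - x)) + b * (y * (1 - y))) :
    |(∫ x in (0:ℝ)..1, ∫ y in (0:ℝ)..1, F x y) - ∫ x in (0:ℝ)..1, ∫ y in (0:ℝ)..1, G x y| ≤
      a / 6 + b / 6 := by
  have hslice {H : ℝ → ℝ → ℝ}
      (hH : ContinuousOn (fun p : ℝ × ℝ => H p.1 p.2) (Icc (0:ℝ) 1 ×ˢ Icc (0:ℝ) 1))
      {x : ℝ} (hx : x ∈ Icc (0:ℝ) 1) : ContinuousOn (H x) (Icc 0 1) :=
    hH.comp (by fun_prop) fun y hy => mk_mem_prod hx hy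
  have hF' := continuousOn_intervalIntegral_of_continuousOn_prod zero_le_one zero_le_one hF
  have hG' := continuousOn_intervalIntegral_of_continuousOn_prod zero_le_one zero_le_one hG
  rw [← integral_sub (hF'.intervalIntegrable_of_Icc zero_le_one)
    (hG'.intervalIntegrable_of_Icc zero_le_one)]
  refine abs_integral_le_of_abs_le (hF'.sub hG') fun x hx => ?_
  rw [← integral_sub ((hslice hF hx).intervalIntegrable_of_Icc zero_le_one)
    ((hslice hG hx).intervalIntegrable_of_Icc zero_le_one)]
  have hinner := abs_integral_le_of_abs_le (f := fun y => F x y - G x y)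
    ((hslice hF hx).sub (hslice hG hx))
    fun y hy => (hbound x hx y hy).trans_eq (add_comm _ _)
  linarith

lemma abs_le_iSup_abs_of_continuousOn {X : Type*} [TopologicalSpace X] {K : Set X}
    (hK : IsCompact K) {f : X → ℝ} (hf : ContinuousOn f K) {p : X} (hp : p ∈ K) :
    |f p| ≤ ⨆ q : K, |f q| := by
  obtain ⟨C, hC⟩ := hK.exists_bound_of_continuousOn hf
  exact le_ciSup (f := fun q : K => |f q|) ⟨C, by rintro _ ⟨q, rfl⟩; exact hC q q.2⟩ ⟨p, hp⟩

theorem stmt5_general (n₁ n₂ : ℕ) (hn₁ : 0 < n₁) (hn₂ : 0 < n₂)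
    (F Fx Fxx Fy Fyy Fxxyy : ℝ → ℝ → ℝ)
    (hFc : ContinuousOn (fun p : ℝ × ℝ => F p.1 p.2)
      (Set.Icc (0:ℝ) 1 ×ˢ Set.Icc (0:ℝ) 1))
    (hFx : ∀ y ∈ Set.Icc (0:ℝ) 1, ∀ x ∈ Set.Icc (0:ℝ) 1,
      HasDerivWithinAt (fun t => F t y) (Fx x y) (Set.Icc (0:ℝ) 1) x)
    (hFxx : ∀ y ∈ Set.Icc (0:ℝ) 1, ∀ x ∈ Set.Icc (0:ℝ) 1,
      HasDerivWithinAt (fun t => Fx t y) (Fxx x y) (Set.Icc (0:ℝ) 1) x)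
    (hFy : ∀ x ∈ Set.Icc (0:ℝ) 1, ∀ y ∈ Set.Icc (0:ℝ) 1,
      HasDerivWithinAt (fun t => F x t) (Fy x y) (Set.Icc (0:ℝ) 1) y)
    (hFyy : ∀ x ∈ Set.Icc (0:ℝ) 1, ∀ y ∈ Set.Icc (0:ℝ) 1,
      HasDerivWithinAt (fun t => Fy x t) (Fyy x y) (Set.Icc (0:ℝ) 1) y)
    (hFxxc : ContinuousOn (fun p : ℝ × ℝ => Fxx p.1 p.2)
      (Set.Icc (0:ℝ) 1 ×ˢ Set.Icc (0:ℝ) 1))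
    (hFyyc : ContinuousOn (fun p : ℝ × ℝ => Fyy p.1 p.2)
      (Set.Icc (0:ℝ) 1 ×ˢ Set.Icc (0:ℝ) 1)) :
    |(∫ x in (0:ℝ)..1, ∫ y in (0:ℝ)..1, F x y) -
        (1 / (((n₁ : ℝ) + 1) * ((n₂ : ℝ) + 1))) *
          ∑ i ∈ Finset.range (n₁ + 1), ∑ j ∈ Finset.range (n₂ + 1),
            F ((i : ℝ) / n₁) ((j : ℝ) / n₂)| ≤
      (1 / (12 * n₁)) * (⨆ p : (Set.Icc (0:ℝ) 1 ×ˢ Set.Icc (0:ℝ) 1 : Set (ℝ × ℝ)),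
          |Fxx (p : ℝ × ℝ).1 (p : ℝ × ℝ).2|) +
        (1 / (12 * n₂)) * (⨆ p : (Set.Icc (0:ℝ) 1 ×ˢ Set.Icc (0:ℝ) 1 : Set (ℝ × ℝ)),
          |Fyy (p : ℝ × ℝ).1 (p : ℝ × ℝ).2|) +
        (1 / (144 * n₁ * n₂)) * (⨆ p : (Set.Icc (0:ℝ) 1 ×ˢ Set.Icc (0:ℝ) 1 : Set (ℝ × ℝ)),
          |Fxxyy (p : ℝ × ℝ).1 (p : ℝ × ℝ).2|) := by
  have hsq : IsCompact (Icc (0:ℝ) 1 ×ˢ Icc (0:ℝ) 1) := isCompact_Icc.prod isCompact_Icc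
  set Mxx := ⨆ p : (Icc (0:ℝ) 1 ×ˢ Icc (0:ℝ) 1 : Set (ℝ × ℝ)), |Fxx (p : ℝ × ℝ).1 (p : ℝ × ℝ).2|
  set Myy := ⨆ p : (Icc (0:ℝ) 1 ×ˢ Icc (0:ℝ) 1 : Set (ℝ × ℝ)), |Fyy (p : ℝ × ℝ).1 (p : ℝ × ℝ).2|
  have hMxx (x) (hx : x ∈ Icc (0:ℝ) 1) (y) (hy : y ∈ Icc (0:ℝ) 1) : |Fxx x y| ≤ Mxx :=
    abs_le_iSup_abs_of_continuousOn hsq hFxxc (mk_mem_prod hx hy)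
  have hMyy (x) (hx : x ∈ Icc (0:ℝ) 1) (y) (hy : y ∈ Icc (0:ℝ) 1) : |Fyy x y| ≤ Myy :=
    abs_le_iSup_abs_of_continuousOn hsq hFyyc (mk_mem_prod hx hy)
  have hremainder := abs_integral_integral_sub_le (a := Mxx / (2 * n₁)) (b := Myy / (2 * n₂)) hFc
    (continuous_bernsteinOp₂ n₁ n₂ F).continuousOn fun x hx y hy =>
      (abs_sub_bernsteinOp₂_le hn₁.ne' hn₂.ne' hFx hFxx hFy hFyy hMxx hMyy hx hy).trans_eq
        (by ring)
  rw [integral_integral_bernsteinOp₂] at hremainder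
  have hMxxyy : 0 ≤ ⨆ p : (Icc (0:ℝ) 1 ×ˢ Icc (0:ℝ) 1 : Set (ℝ × ℝ)),
      |Fxxyy (p : ℝ × ℝ).1 (p : ℝ × ℝ).2| := Real.iSup_nonneg fun _ => abs_nonneg _
  calc _ ≤ Mxx / (2 * n₁) / 6 + Myy / (2 * n₂) / 6 := hremainder
    _ = 1 / (12 * n₁) * Mxx + 1 / (12 * n₂) * Myy := by ring
    _ ≤ _ := le_add_of_nonneg_right (mul_nonneg (by positivity) hMxxyy)

/-- three-term remainder bound for the tensor-product Bernstein cubature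
formula, for `F ∈ C^{2,2}([0,1]²)`. -/
theorem stmt5 (n₁ n₂ : ℕ) (hn₁ : 0 < n₁) (hn₂ : 0 < n₂)
    (F Fx Fxx Fy Fyy Fxxy Fxxyy : ℝ → ℝ → ℝ)
    (hFc : ContinuousOn (fun p : ℝ × ℝ => F p.1 p.2)
      (Set.Icc (0:ℝ) 1 ×ˢ Set.Icc (0:ℝ) 1))
    (hFx : ∀ y ∈ Set.Icc (0:ℝ) 1, ∀ x ∈ Set.Icc (0:ℝ) 1,
      HasDerivWithinAt (fun t => F t y) (Fx x y) (Set.Icc (0:ℝ) 1) x)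
    (hFxx : ∀ y ∈ Set.Icc (0:ℝ) 1, ∀ x ∈ Set.Icc (0:ℝ) 1,
      HasDerivWithinAt (fun t => Fx t y) (Fxx x y) (Set.Icc (0:ℝ) 1) x)
    (hFy : ∀ x ∈ Set.Icc (0:ℝ) 1, ∀ y ∈ Set.Icc (0:ℝ) 1,
      HasDerivWithinAt (fun t => F x t) (Fy x y) (Set.Icc (0:ℝ) 1) y)
    (hFyy : ∀ x ∈ Set.Icc (0:ℝ) 1, ∀ y ∈ Set.Icc (0:ℝ) 1,
      HasDerivWithinAt (fun t => Fy x t) (Fyy x y) (Set.Icc (0:ℝ) 1) y)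
    (hFxxy : ∀ x ∈ Set.Icc (0:ℝ) 1, ∀ y ∈ Set.Icc (0:ℝ) 1,
      HasDerivWithinAt (fun t => Fxx x t) (Fxxy x y) (Set.Icc (0:ℝ) 1) y)
    (hFxxyy : ∀ x ∈ Set.Icc (0:ℝ) 1, ∀ y ∈ Set.Icc (0:ℝ) 1,
      HasDerivWithinAt (fun t => Fxxy x t) (Fxxyy x y) (Set.Icc (0:ℝ) 1) y)
    (hFxxc : ContinuousOn (fun p : ℝ × ℝ => Fxx p.1 p.2)
      (Set.Icc (0:ℝ) 1 ×ˢ Set.Icc (0:ℝ) 1))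
    (hFyyc : ContinuousOn (fun p : ℝ × ℝ => Fyy p.1 p.2)
      (Set.Icc (0:ℝ) 1 ×ˢ Set.Icc (0:ℝ) 1))
    (hFxxyyc : ContinuousOn (fun p : ℝ × ℝ => Fxxyy p.1 p.2)
      (Set.Icc (0:ℝ) 1 ×ˢ Set.Icc (0:ℝ) 1)) :
    |(∫ x in (0:ℝ)..1, ∫ y in (0:ℝ)..1, F x y) -
        (1 / (((n₁ : ℝ) + 1) * ((n₂ : ℝ) + 1))) *
          ∑ i ∈ Finset.range (n₁ + 1), ∑ j ∈ Finset.range (n₂ + 1),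
            F ((i : ℝ) / n₁) ((j : ℝ) / n₂)| ≤
      (1 / (12 * n₁)) * (⨆ p : (Set.Icc (0:ℝ) 1 ×ˢ Set.Icc (0:ℝ) 1 : Set (ℝ × ℝ)),
          |Fxx (p : ℝ × ℝ).1 (p : ℝ × ℝ).2|) +
        (1 / (12 * n₂)) * (⨆ p : (Set.Icc (0:ℝ) 1 ×ˢ Set.Icc (0:ℝ) 1 : Set (ℝ × ℝ)),
          |Fyy (p : ℝ × ℝ).1 (p : ℝ × ℝ).2|) +
        (1 / (144 * n₁ * n₂)) * (⨆ p : (Set.Icc (0:ℝ) 1 ×ˢ Set.Icc (0:ℝ) 1 : Set (ℝ × ℝ)),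
          |Fxxyy (p : ℝ × ℝ).1 (p : ℝ × ℝ).2|) :=
  stmt5_general n₁ n₂ hn₁ hn₂ F Fx Fxx Fy Fyy Fxxyy hFc hFx hFxx hFy hFyy hFxxc hFyyc
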